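/- Given constants c, s₀, k > 0, if h = (ks₀ + 4ks₀²)c and c̃ ≥ h, then for all ρ ≥ 0, τ₁ > 0, τ₂ > 0, t > 0 with τ₁t ≤ s₀ and τ₂t ≤ s₀, and all real numbers v_p, v_q with |v_q² - v_p²| ≤ k(|v_p|ρ + ρ²), one has -ρ²/(4cτ₁) - (τ₁t²/c)v_p² + (τ₂t²/c̃)|v_q² - v_p²| ≤ 0. -/
import Mathlib


set_option maxHeartbeats 1000000 in
/-- The algebraic core of Lemma B. -/
theorem lemmaB_algebraic_core (c s₀ k : ℝ) (hc : 0 < c) (hs₀ : 0 < s₀) (hk : 0 < k)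
    (ctil : ℝ) (hctil : (k * s₀ + 4 * k * s₀ ^ 2) * c ≤ ctil)
    (ρ τ₁ τ₂ t : ℝ) (hρ : 0 ≤ ρ) (hτ₁ : 0 < τ₁) (hτ₂ : 0 < τ₂) (ht : 0 < t)
    (h₁ : τ₁ * t ≤ s₀) (h₂ : τ₂ * t ≤ s₀)
    (vp vq : ℝ) (hv : |vq ^ 2 - vp ^ 2| ≤ k * (|vp| * ρ + ρ ^ 2)) :
    -ρ ^ 2 / (4 * c * τ₁) - (τ₁ * t ^ 2 / c) * vp ^ 2
      + (τ₂ * t ^ 2 / ctil) * |vq ^ 2 - vp ^ 2| ≤ 0 := by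
  have hct : 0 < ctil := lt_of_lt_of_le (by positivity) hctil
  set E := |vq ^ 2 - vp ^ 2| with hE
  have hE0 : 0 ≤ E := abs_nonneg _
  have hvp : 0 ≤ |vp| := abs_nonneg _
  -- key polynomial inequality
  have hmm : τ₁ * τ₂ * t ^ 2 ≤ s₀ ^ 2 := by nlinarith [mul_pos hτ₁ ht, mul_pos hτ₂ ht]
  have hamgm : 4 * τ₁ * t * |vp| * ρ ≤ ρ ^ 2 + 4 * τ₁ ^ 2 * t ^ 2 * vp ^ 2 := by
    rw [← sq_abs vp]
    nlinarith [sq_nonneg (2 * τ₁ * t * |vp| - ρ)]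
  have hamgm0 : 0 ≤ 4 * τ₁ * t * |vp| * ρ := by positivity
  have step1 : 4 * c * τ₁ * τ₂ * t ^ 2 * (k * (|vp| * ρ))
      ≤ k * s₀ * c * (ρ ^ 2 + 4 * τ₁ ^ 2 * t ^ 2 * vp ^ 2) := by
    have h3 : τ₂ * t * (4 * τ₁ * t * |vp| * ρ) ≤ s₀ * (ρ ^ 2 + 4 * τ₁ ^ 2 * t ^ 2 * vp ^ 2) := by
      calc τ₂ * t * (4 * τ₁ * t * |vp| * ρ) ≤ s₀ * (4 * τ₁ * t * |vp| * ρ) :=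
            mul_le_mul_of_nonneg_right h₂ hamgm0
        _ ≤ s₀ * (ρ ^ 2 + 4 * τ₁ ^ 2 * t ^ 2 * vp ^ 2) :=
            mul_le_mul_of_nonneg_left hamgm hs₀.le
    nlinarith [mul_le_mul_of_nonneg_left h3 (by positivity : (0:ℝ) ≤ k * c)]
  have step2 : 4 * c * τ₁ * τ₂ * t ^ 2 * (k * ρ ^ 2) ≤ 4 * c * k * s₀ ^ 2 * ρ ^ 2 := by
    nlinarith [mul_le_mul_of_nonneg_left hmm (by positivity : (0:ℝ) ≤ 4 * c * k * ρ ^ 2)]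
  have key : 4 * c * τ₁ * τ₂ * t ^ 2 * E ≤ ctil * (ρ ^ 2 + 4 * τ₁ ^ 2 * t ^ 2 * vp ^ 2) := by
    have hE' : 4 * c * τ₁ * τ₂ * t ^ 2 * E ≤ 4 * c * τ₁ * τ₂ * t ^ 2 * (k * (|vp| * ρ + ρ ^ 2)) :=
      mul_le_mul_of_nonneg_left hv (by positivity)
    have hct2 : k * s₀ * c + 4 * k * s₀ ^ 2 * c ≤ ctil := by nlinarith
    have hB : (0:ℝ) ≤ 4 * τ₁ ^ 2 * t ^ 2 * vp ^ 2 := by positivity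
    have p1 : (k * s₀ * c + 4 * k * s₀ ^ 2 * c) * ρ ^ 2 ≤ ctil * ρ ^ 2 :=
      mul_le_mul_of_nonneg_right hct2 (sq_nonneg ρ)
    have hksc : k * s₀ * c ≤ ctil := by nlinarith
    have p2 : (k * s₀ * c) * (4 * τ₁ ^ 2 * t ^ 2 * vp ^ 2) ≤ ctil * (4 * τ₁ ^ 2 * t ^ 2 * vp ^ 2) :=
      mul_le_mul_of_nonneg_right hksc hB
    linarith [hE', step1, step2, p1, p2]
  have e1 : -ρ ^ 2 / (4 * c * τ₁) - (τ₁ * t ^ 2 / c) * vp ^ 2 + (τ₂ * t ^ 2 / ctil) * E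
      = (4 * c * τ₁ * τ₂ * t ^ 2 * E - ctil * (ρ ^ 2 + 4 * τ₁ ^ 2 * t ^ 2 * vp ^ 2))
        / (4 * c * τ₁ * ctil) := by
    field_simp
    ring
  rw [e1]
  apply div_nonpos_of_nonpos_of_nonneg
  · linarith
  · positivity
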